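/- In the setting of odd-cardinality-line geometries, the sum over all assignments a : V → F₂ of e^{i ℓ(a) · 2π/|L|} is a real number. -/

import Mathlib

open Real Complex

/-- The number of invalid lines of an assignment `a`. -/
def invalidCount {V ι : Type*} [DecidableEq V] [Fintype ι]
    (line : ι → Finset V) (s : ι → ZMod 2) (a : V → ZMod 2) : ℕ :=
  (Finset.univ.filter fun i => ∑ v ∈ line i, a v ≠ s i).card

/-! Flipping every bit of an assignment changes the parity of each odd line, so it swaps valid
and invalid lines: `ℓ(a + 1) = |L| - ℓ(a)`. The phase `e^{i (|L| - k) 2π/|L|}` is the conjugate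
of `e^{i k 2π/|L|}`, hence the involution `a ↦ a + 1` of the sum conjugates every term, and the
sum equals its own conjugate. -/

open scoped ComplexConjugate

theorem Complex.im_sum_eq_zero_of_conj_comp_equiv {α : Type*} [Fintype α] (f : α → ℂ)
    (e : α ≃ α) (h : ∀ a, f (e a) = conj (f a)) : (∑ a, f a).im = 0 := by
  rw [← Complex.conj_eq_iff_im, map_sum, ← e.sum_comp f]
  exact Finset.sum_congr rfl fun a _ => (h a).symm

theorem Complex.exp_mul_two_pi_div_of_add_eq {k m n : ℕ} (h : k + m = n) :
    exp (I * m * (2 * π / n)) = conj (exp (I * k * (2 * π / n))) := by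
  rw [← exp_conj]
  simp only [map_mul, map_div₀, conj_I, map_ofNat, conj_ofReal, conj_natCast]
  rcases Nat.eq_zero_or_pos n with rfl | hn
  · simp -- `2 * π / 0 = 0`, so both phases are `1`
  · have hn : (n : ℂ) ≠ 0 := by exact_mod_cast hn.ne'
    have hm : (m : ℂ) = n - k := by rw [← h]; push_cast; ring
    rw [hm, show I * (n - k) * (2 * π / n) = 2 * π * I + -I * k * (2 * π / n) by
      field_simp; ring, exp_add, exp_two_pi_mul_I, one_mul]

theorem ZMod.sum_add_one_of_odd_card {V : Type*} {t : Finset V} (ht : Odd t.card)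
    (a : V → ZMod 2) : ∑ v ∈ t, (a + 1) v = ∑ v ∈ t, a v + 1 := by
  simp only [Pi.add_apply, Pi.one_apply, Finset.sum_add_distrib, Finset.sum_const,
    nsmul_eq_mul, mul_one, ZMod.natCast_eq_one_iff_odd.mpr ht]

theorem invalidCount_add_invalidCount_add_one {V ι : Type*} [DecidableEq V] [Fintype ι]
    (line : ι → Finset V) (s : ι → ZMod 2) (hodd : ∀ i, Odd (line i).card) (a : V → ZMod 2) :
    invalidCount line s a + invalidCount line s (a + 1) = Fintype.card ι := by
  have hflip : ∀ x y : ZMod 2, x + 1 ≠ y ↔ ¬x ≠ y := by decide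
  simp only [invalidCount, ZMod.sum_add_one_of_odd_card (hodd _), hflip]
  rw [Finset.card_filter_add_card_filter_not, Finset.card_univ]

/-- For a geometry with odd-cardinality lines, the sum over all assignments
of the quasi-Grover phases `e^{i ℓ(a)·2π/|L|}` is a real number. -/
theorem phase_sum_real {V ι : Type*} [Fintype V] [DecidableEq V] [Fintype ι]
    (line : ι → Finset V) (s : ι → ZMod 2)
    (hodd : ∀ i, Odd (line i).card) :
    (∑ a : V → ZMod 2,
      Complex.exp (Complex.I * (invalidCount line s a : ℂ) *
        (2 * (Real.pi : ℂ) / (Fintype.card ι : ℂ)))).im = 0 :=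
  Complex.im_sum_eq_zero_of_conj_comp_equiv _ (Equiv.addRight 1) fun a =>
    Complex.exp_mul_two_pi_div_of_add_eq
      (invalidCount_add_invalidCount_add_one line s hodd a)
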